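/- For 0 ≤ p ≤ n, the number of maximal induced hypercubes of dimension p in the Fibonacci cube Γ_n equals binomial(p+1, n-2p+1). -/

import Mathlib

/-- The hypercube graph `Q_n` on binary strings of length `n`:
two strings are adjacent iff they differ in exactly one coordinate. -/
def Qgraph (n : ℕ) : SimpleGraph (Fin n → Bool) where
  Adj x y := hammingDist x y = 1
  symm := ⟨fun x y h => by simpa [hammingDist_comm] using h⟩
  loopless := ⟨fun x h => by simp [hammingDist_self] at h⟩

/-- The weight of a binary string: its number of `1`s. -/
def wt {n : ℕ} (x : Fin n → Bool) : ℕ :=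
  (Finset.univ.filter fun i => x i = true).card

/-- Fibonacci strings of length `n`: no two (cyclically non-wrapping) consecutive 1's. -/
def fibSet (n : ℕ) : Set (Fin n → Bool) :=
  {s | ∀ i j : Fin n, (j : ℕ) = (i : ℕ) + 1 → ¬(s i = true ∧ s j = true)}

/-- Lucas strings of length `n`: Fibonacci strings whose first and last bits are not both 1. -/
def lucasSet (n : ℕ) : Set (Fin n → Bool) :=
  {s | s ∈ fibSet n ∧
    ∀ i j : Fin n, (i : ℕ) = 0 → (j : ℕ) = n - 1 → ¬(s i = true ∧ s j = true)}

/-- The binary string `0^{l_0} 1 0^{l_1} 1 ⋯ 1 0^{l_p}` determined by a list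
of lengths of blocks of `0`'s. -/
def blockString (l : List ℕ) : List Bool :=
  List.intercalate [true] (l.map fun k => List.replicate k false)

/-- The vertex of `Q_n` corresponding to the string `0^{l_0} 1 0^{l_1} 1 ⋯ 1 0^{l_p}`. -/
def ofBlocks (n : ℕ) (l : List ℕ) : Fin n → Bool :=
  fun i => (blockString l).getD (i : ℕ) false

/-- `V` induces a maximal hypercube of dimension `p` inside the subgraph of `Q_n`
induced by the vertex set `S`. -/
def IsMaxCube (n p : ℕ) (S : Set (Fin n → Bool)) (V : Set (Fin n → Bool)) : Prop :=
  V ⊆ S ∧ Nonempty ((Qgraph n).induce V ≃g Qgraph p) ∧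
    ¬ ∃ V' : Set (Fin n → Bool), V ⊂ V' ∧ V' ⊆ S ∧
      Nonempty ((Qgraph n).induce V' ≃g Qgraph (p + 1))

/-- Binomial coefficient `a` choose `b` with an integer lower argument,
equal to `0` when `b < 0`. -/
def chooseZ (a : ℕ) (b : ℤ) : ℕ := if 0 ≤ b then a.choose b.toNat else 0


namespace FibCube
variable {n : ℕ}

def flip (u : Fin n → Bool) (c : Fin n) : Fin n → Bool := Function.update u c (!(u c))

@[simp] lemma flip_self (u : Fin n → Bool) (c : Fin n) : flip u c c = !(u c) := by
  simp [flip]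

lemma flip_ne (u : Fin n → Bool) {c d : Fin n} (h : d ≠ c) : flip u c d = u d := by
  simp [flip, Function.update_of_ne h]

@[simp] lemma flip_flip (u : Fin n → Bool) (c : Fin n) : flip (flip u c) c = u := by
  funext d
  by_cases h : d = c
  · subst h; simp
  · rw [flip_ne _ h, flip_ne _ h]

lemma hammingDist_eq_card (u v : Fin n → Bool) :
    hammingDist u v = (Finset.univ.filter fun i => u i ≠ v i).card := rfl

lemma dist_one_iff {u v : Fin n → Bool} : hammingDist u v = 1 ↔ ∃ c, v = flip u c := by
  constructor
  · intro h
    rw [hammingDist_eq_card, Finset.card_eq_one] at h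
    obtain ⟨c, hc⟩ := h
    refine ⟨c, funext fun d => ?_⟩
    by_cases hd : d = c
    · subst hd
      have : d ∈ Finset.univ.filter fun i => u i ≠ v i := by rw [hc]; simp
      have := (Finset.mem_filter.mp this).2
      simp only [flip_self]
      revert this; cases u d <;> cases v d <;> simp
    · have : d ∉ Finset.univ.filter fun i => u i ≠ v i := by
        rw [hc]; simp [hd]
      have := Finset.mem_filter.not.mp this
      simp only [Finset.mem_univ, true_and, not_not] at this
      rw [flip_ne _ hd, ← this]
  · rintro ⟨c, rfl⟩
    rw [hammingDist_eq_card]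
    rw [Finset.card_eq_one]
    exact ⟨c, by ext d; by_cases hd : d = c <;> simp [hd, flip_ne]⟩

lemma Qadj_iff {u v : Fin n → Bool} : (Qgraph n).Adj u v ↔ ∃ c, v = flip u c := dist_one_iff

lemma dist_flip (u : Fin n → Bool) (c : Fin n) : hammingDist u (flip u c) = 1 :=
  dist_one_iff.mpr ⟨c, rfl⟩

/-- common neighbor of vertices at distance 2 -/
lemma common_neighbor {u v : Fin n → Bool} {a b : Fin n} (hab : a ≠ b)
    (h1 : hammingDist u v = 1) (h2 : hammingDist v (flip (flip u a) b) = 1) :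
    v = flip u a ∨ v = flip u b := by
  obtain ⟨c, rfl⟩ := dist_one_iff.mp h1
  by_cases hca : c = a
  · left; rw [hca]
  by_cases hcb : c = b
  · right; rw [hcb]
  exfalso
  set w := flip (flip u a) b with hw
  have hsub : ({a, b, c} : Finset (Fin n)) ⊆ Finset.univ.filter fun i => flip u c i ≠ w i := by
    intro x hx
    simp only [Finset.mem_insert, Finset.mem_singleton] at hx
    simp only [Finset.mem_filter, Finset.mem_univ, true_and]
    rcases hx with rfl | rfl | rfl
    · rw [flip_ne _ (Ne.symm hca), hw, flip_ne _ hab, flip_self]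
      cases u x <;> simp
    · rw [flip_ne _ (Ne.symm hcb), hw, flip_self, flip_ne _ (Ne.symm hab)]
      cases u x <;> simp
    · rw [flip_self, hw, flip_ne _ hcb, flip_ne _ hca]
      cases u x <;> simp
  have hcard : ({a, b, c} : Finset (Fin n)).card = 3 := by
    rw [Finset.card_insert_of_notMem (by simp [hab, hca, Ne.symm hca]),
      Finset.card_insert_of_notMem (by simp [Ne.symm hcb]), Finset.card_singleton]
  have := Finset.card_le_card hsub
  rw [hcard, ← hammingDist_eq_card, h2] at this
  omega


def cubeSet (F : Finset (Fin n)) (b : Fin n → Bool) : Set (Fin n → Bool) :=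
  {x | ∀ j ∉ F, x j = b j}

lemma xor_ne_iff (a b c : Bool) : (xor a c ≠ xor b c) ↔ a ≠ b := by
  cases a <;> cases b <;> cases c <;> simp

/-- A subcube induces a hypercube of its dimension. -/
noncomputable def cubeIso (F : Finset (Fin n)) (b : Fin n → Bool) :
    (Qgraph n).induce (cubeSet F b) ≃g Qgraph F.card := by
  classical
  let e := F.equivFin
  refine ⟨⟨fun x i => xor (x.1 (e.symm i).1) (b (e.symm i).1),
    fun g => ⟨fun j => if h : j ∈ F then xor (g (e ⟨j, h⟩)) (b j) else b j, ?_⟩, ?_, ?_⟩, ?_⟩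
  · intro j hj; simp [hj]
  · rintro ⟨x, hx⟩
    ext j
    by_cases hj : j ∈ F
    · simp only [hj, dif_pos]
      have : e.symm (e ⟨j, hj⟩) = ⟨j, hj⟩ := e.symm_apply_apply _
      rw [this]
      cases x j <;> cases b j <;> rfl
    · simp only [hj, dif_neg, not_false_iff]
      exact (hx j hj).symm
  · intro g
    funext i
    have h : (e.symm i).1 ∈ F := (e.symm i).2
    simp only [h, dif_pos]
    have : (⟨(e.symm i).1, h⟩ : {x // x ∈ F}) = e.symm i := rfl
    rw [this, e.apply_symm_apply]
    cases g i <;> cases b (e.symm i).1 <;> rfl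
  · rintro ⟨x, hx⟩ ⟨y, hy⟩
    show hammingDist _ _ = 1 ↔ hammingDist x y = 1
    have key : hammingDist x y =
        hammingDist (fun i => xor (x (e.symm i).1) (b (e.symm i).1))
          (fun i => xor (y (e.symm i).1) (b (e.symm i).1)) := by
      show (Finset.univ.filter fun j => x j ≠ y j).card =
        (Finset.univ.filter fun i => _ ≠ _).card
      refine Finset.card_bij' (fun j hj => e ⟨j, ?_⟩) (fun i _ => (e.symm i).1) ?_ ?_ ?_ ?_
      · by_contra hjF
        have := Finset.mem_filter.mp hj
        exact this.2 ((hx j hjF).trans (hy j hjF).symm)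
      · intro j hj
        simp only [Finset.mem_filter, Finset.mem_univ, true_and] at hj ⊢
        rw [e.symm_apply_apply]
        exact (xor_ne_iff _ _ _).mpr hj
      · intro i hi
        simp only [Finset.mem_filter, Finset.mem_univ, true_and] at hi ⊢
        exact (xor_ne_iff _ _ _).mp hi
      · intro j hj
        simp [e.symm_apply_apply]
      · intro i hi
        simp [e.apply_symm_apply]
    exact key ▸ Iff.rfl

/-- indicator function of a finset -/
def ind {p : ℕ} (s : Finset (Fin p)) : Fin p → Bool := fun i => decide (i ∈ s)

lemma ind_insert {p : ℕ} {s : Finset (Fin p)} {i : Fin p} (hi : i ∉ s) :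
    ind (insert i s) = flip (ind s) i := by
  funext j
  by_cases hj : j = i
  · subst hj
    rw [flip_self]
    simp [ind, hi]
  · rw [flip_ne _ hj]
    simp [ind, hj]

lemma ind_inj {p : ℕ} {s t : Finset (Fin p)} (h : ind s = ind t) : s = t := by
  ext i
  have := congrFun h i
  simp only [ind, decide_eq_decide] at this
  exact this

theorem induced_cube_is_subcube {p : ℕ} {V : Set (Fin n → Bool)}
    (φ : (Qgraph n).induce V ≃g Qgraph p) :
    ∃ (F : Finset (Fin n)) (b : Fin n → Bool), F.card = p ∧ V = cubeSet F b := by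
  classical
  set ψ : (Fin p → Bool) → (Fin n → Bool) := fun g => ((φ.symm g : ↥V) : Fin n → Bool) with hψ
  have hψinj : Function.Injective ψ := by
    intro g g' h
    exact φ.symm.injective (Subtype.ext h)
  have hψadj : ∀ g g' : Fin p → Bool, hammingDist g g' = 1 → hammingDist (ψ g) (ψ g') = 1 := by
    intro g g' h
    have := (φ.symm.map_rel_iff (a := g) (b := g')).mpr h
    exact this
  set b : Fin n → Bool := ψ (ind ∅) with hb
  -- choose flip coordinates
  have hexists : ∀ i : Fin p, ∃ c, ψ (ind {i}) = flip b c := by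
    intro i
    apply dist_one_iff.mp
    apply hψadj
    have : ind ({i} : Finset (Fin p)) = flip (ind ∅) i := ind_insert (Finset.notMem_empty i)
    rw [this]
    exact dist_flip _ _
  choose f hf using hexists
  have hfinj : Function.Injective f := by
    intro i i' h
    have : ψ (ind {i}) = ψ (ind {i'}) := by rw [hf, hf, h]
    have := ind_inj (hψinj this)
    simpa using this
  set mask : Finset (Fin p) → (Fin n → Bool) :=
    fun s j => if ∃ i ∈ s, f i = j then !(b j) else b j with hmask
  have mask_empty : mask ∅ = b := by
    funext j; simp [hmask]
  have mask_insert : ∀ {s : Finset (Fin p)} {i : Fin p}, i ∉ s →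
      mask (insert i s) = flip (mask s) (f i) := by
    intro s i hi
    funext j
    by_cases hj : j = f i
    · subst hj
      rw [flip_self]
      have h1 : ∃ i' ∈ insert i s, f i' = f i := ⟨i, Finset.mem_insert_self i s, rfl⟩
      have h2 : ¬ ∃ i' ∈ s, f i' = f i := by
        rintro ⟨i', hi', he⟩
        exact hi (hfinj he ▸ hi')
      simp only [hmask, h1, if_pos, h2, if_neg, not_false_iff]
    · rw [flip_ne _ hj]
      have : (∃ i' ∈ insert i s, f i' = j) ↔ (∃ i' ∈ s, f i' = j) := by
        constructor
        · rintro ⟨i', hi', he⟩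
          rcases Finset.mem_insert.mp hi' with rfl | h
          · exact absurd he (by simpa [eq_comm] using hj)
          · exact ⟨i', h, he⟩
        · rintro ⟨i', hi', he⟩
          exact ⟨i', Finset.mem_insert_of_mem hi', he⟩
      simp only [hmask, this]
  -- main claim
  have main : ∀ (d : ℕ) (s : Finset (Fin p)), s.card = d → ψ (ind s) = mask s := by
    intro d
    induction d using Nat.strong_induction_on with
    | _ d IH =>
      intro s hs
      match d, hs with
      | 0, hs =>
        rw [Finset.card_eq_zero.mp hs, mask_empty]
      | 1, hs =>
        obtain ⟨i, rfl⟩ := Finset.card_eq_one.mp hs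
        have : ({i} : Finset (Fin p)) = insert i ∅ := rfl
        rw [this, mask_insert (by simp), mask_empty, ← this]
        exact hf i
      | (d+2), hs =>
        obtain ⟨i, hi, i', hi', hii⟩ := Finset.one_lt_card.mp (by omega : 1 < s.card)
        set y := s.erase i with hy
        set z := s.erase i' with hz
        set w := (s.erase i).erase i' with hw
        have hiy : i ∉ y := Finset.notMem_erase _ _
        have hi'z : i' ∉ z := Finset.notMem_erase _ _
        have hi'w : i' ∉ w := Finset.notMem_erase _ _
        have hiw : i ∉ w := fun h => Finset.notMem_erase i s (Finset.mem_of_mem_erase h)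
        have hsy : s = insert i y := (Finset.insert_erase hi).symm
        have hsz : s = insert i' z := (Finset.insert_erase hi').symm
        have hyw : y = insert i' w := by
          rw [hw, Finset.insert_erase (Finset.mem_erase.mpr ⟨Ne.symm hii, hi'⟩)]
        have hzw : z = insert i w := by
          rw [hz, hw, Finset.erase_right_comm, Finset.insert_erase]
          exact Finset.mem_erase.mpr ⟨hii, hi⟩
        have hcy : y.card = d + 1 := by
          rw [hy, Finset.card_erase_of_mem hi, hs]
          omega
        have hcz : z.card = d + 1 := by
          rw [hz, Finset.card_erase_of_mem hi', hs]
          omega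
        have hcw : w.card = d := by
          rw [hw, Finset.card_erase_of_mem (Finset.mem_erase.mpr ⟨Ne.symm hii, hi'⟩),
            Finset.card_erase_of_mem hi, hs]
          omega
        have IHy := IH (d+1) (by omega) y hcy
        have IHz := IH (d+1) (by omega) z hcz
        have IHw := IH d (by omega) w hcw
        -- adjacency facts
        have adj1 : hammingDist (ψ (ind y)) (ψ (ind s)) = 1 := by
          apply hψadj
          rw [hsy, ind_insert hiy]
          exact dist_flip _ _
        have adj2 : hammingDist (ψ (ind s)) (ψ (ind z)) = 1 := by
          rw [hammingDist_comm]
          apply hψadj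
          rw [hsz, ind_insert hi'z]
          exact dist_flip _ _
        have hmys : flip (mask y) (f i) = mask s := by
          rw [hsy, mask_insert hiy]
        have hmzw : mask z = flip (mask w) (f i) := by
          rw [hzw, mask_insert hiw]
        have hmyw : mask y = flip (mask w) (f i') := by
          rw [hyw, mask_insert hi'w]
        have hkey : ψ (ind z) = flip (flip (ψ (ind y)) (f i)) (f i') := by
          rw [IHy, IHz, hmys]
          rw [hsz, mask_insert hi'z] at hmys ⊢
          rw [← hzw] at *
          rw [flip_flip]
        have := common_neighbor (hfinj.ne hii) adj1 (hkey ▸ adj2)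
        rcases this with h | h
        · rw [h, IHy, hmys]
        · exfalso
          rw [IHy, hmyw, flip_flip, ← IHw] at h
          have := ind_inj (hψinj h)
          rw [this] at hi
          exact hiw hi
  refine ⟨Finset.univ.image f, b, ?_, ?_⟩
  · rw [Finset.card_image_of_injective _ hfinj, Finset.card_univ, Fintype.card_fin]
  · ext x
    constructor
    · intro hx
      set g := φ ⟨x, hx⟩ with hg
      have hx' : ψ g = x := by
        rw [hψ]
        simp [hg]
      have hgind : ind (Finset.univ.filter fun i => g i = true) = g := by
        funext i
        by_cases h : g i = true <;> simp [ind, h]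
      intro j hj
      have : ¬ ∃ i ∈ (Finset.univ.filter fun i => g i = true), f i = j := by
        rintro ⟨i, _, rfl⟩
        exact hj (Finset.mem_image.mpr ⟨i, Finset.mem_univ i, rfl⟩)
      have hm := main (Finset.univ.filter fun i => g i = true).card _ rfl
      rw [hgind] at hm
      calc x j = mask (Finset.univ.filter fun i => g i = true) j := by rw [← hm, hx']
        _ = b j := by simp only [hmask, this, if_neg, not_false_iff]
    · intro hx
      set s := Finset.univ.filter (fun i => x (f i) ≠ b (f i)) with hsdef
      have : mask s = x := by
        funext j
        by_cases hj : ∃ i ∈ s, f i = j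
        · obtain ⟨i, hi, rfl⟩ := hj
          have h1 : ∃ i' ∈ s, f i' = f i := ⟨i, hi, rfl⟩
          have h2 := (Finset.mem_filter.mp hi).2
          simp only [hmask, h1, if_pos]
          revert h2; cases x (f i) <;> cases b (f i) <;> simp
        · simp only [hmask, hj, if_neg, not_false_iff]
          by_cases hjF : j ∈ Finset.univ.image f
          · obtain ⟨i, _, rfl⟩ := Finset.mem_image.mp hjF
            by_contra hne
            exact hj ⟨i, Finset.mem_filter.mpr ⟨Finset.mem_univ i, Ne.symm hne⟩, rfl⟩
          · exact (hx j hjF).symm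
      rw [← this, ← main s.card s rfl]
      exact (φ.symm (ind s)).2

def Indep (F : Finset (Fin n)) : Prop := ∀ i ∈ F, ∀ j ∈ F, (j : ℕ) ≠ (i : ℕ) + 1

def MaxIndep (F : Finset (Fin n)) : Prop := Indep F ∧ ∀ j ∉ F, ¬ Indep (insert j F)

lemma fib_down {x y : Fin n → Bool} (hle : ∀ i, x i = true → y i = true)
    (hy : y ∈ fibSet n) : x ∈ fibSet n := by
  intro i j hij ⟨h1, h2⟩
  exact hy i j hij ⟨hle i h1, hle j h2⟩

lemma ind_mem_fib {F : Finset (Fin n)} : ind F ∈ fibSet n ↔ Indep F := by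
  constructor
  · intro h i hi j hj hij
    exact h i j hij ⟨by simp [ind, hi], by simp [ind, hj]⟩
  · rintro h i j hij ⟨h1, h2⟩
    simp only [ind, decide_eq_true_eq] at h1 h2
    exact h i h1 j h2 hij

lemma indep_subset {F F' : Finset (Fin n)} (hss : F ⊆ F') (h : Indep F') : Indep F :=
  fun i hi j hj => h i (hss hi) j (hss hj)

lemma cubeSet_congr {F : Finset (Fin n)} {b b' : Fin n → Bool}
    (h : ∀ j ∉ F, b j = b' j) : cubeSet F b = cubeSet F b' := by
  ext x
  constructor <;> intro hx j hj
  · rw [hx j hj, h j hj]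
  · rw [hx j hj, ← h j hj]

lemma cubeSet_zero_inj {F F' : Finset (Fin n)}
    (h : cubeSet F (fun _ => false) = cubeSet F' (fun _ => false)) : F = F' := by
  have key : ∀ {G G' : Finset (Fin n)},
      cubeSet G (fun _ => false) ⊆ cubeSet G' (fun _ => false) → G ⊆ G' := by
    intro G G' hss i hi
    have : ind G ∈ cubeSet G (fun _ => false) := by
      intro k hk; simp [ind, hk]
    have := hss this i
    by_contra hiG'
    have := this hiG'
    simp [ind, hi] at this
  exact Finset.Subset.antisymm (key h.le) (key h.ge)

theorem maxcube_iff {V : Set (Fin n → Bool)} {p : ℕ} :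
    IsMaxCube n p (fibSet n) V ↔
      ∃ F : Finset (Fin n), MaxIndep F ∧ F.card = p ∧ V = cubeSet F (fun _ => false) := by
  constructor
  · rintro ⟨hsub, ⟨φ⟩, hmax⟩
    obtain ⟨F, b, hcard, rfl⟩ := induced_cube_is_subcube φ
    -- top vertex of the cube
    have htop : (fun k => if k ∈ F then true else b k) ∈ cubeSet F b := by
      intro k hk; simp [hk]
    -- b is false outside F
    have hbF : ∀ j ∉ F, b j = false := by
      intro j hj
      by_contra hbj
      have hbj : b j = true := by revert hbj; cases b j <;> simp
      apply hmax
      refine ⟨cubeSet (insert j F) b, ⟨?_, ?_⟩, ?_, ?_⟩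
      · intro x hx k hk
        exact hx k fun hkF => hk (Finset.mem_insert_of_mem hkF)
      · intro hss
        have hm : (fun k => if k ∈ insert j F then false else b k) ∈
            cubeSet (insert j F) b := by
          intro k hk; simp [hk]
        have := hss hm j hj
        simp [hbj] at this
      · intro x hx
        apply fib_down (y := fun k => if k ∈ F then true else b k) _ (hsub htop)
        intro k hkx
        by_cases hkF : k ∈ F
        · simp [hkF]
        · simp only [hkF, if_neg, not_false_iff, if_false]
          by_cases hkj : k = j
          · subst hkj; exact hbj
          · rw [← hx k (by simp [hkj, hkF]), hkx]
      · have hc : (insert j F).card = p + 1 := by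
          rw [Finset.card_insert_of_notMem hj, hcard]
        have : Nonempty ((Qgraph n).induce (cubeSet (insert j F) b)
            ≃g Qgraph ((insert j F).card)) := ⟨cubeIso _ _⟩
        rwa [hc] at this
    have hV0 : cubeSet F b = cubeSet F (fun _ => false) := cubeSet_congr hbF
    have hindF : ind F ∈ cubeSet F b := by
      rw [hV0]; intro k hk; simp [ind, hk]
    have hIndep : Indep F := ind_mem_fib.mp (hsub hindF)
    refine ⟨F, ⟨hIndep, ?_⟩, hcard, hV0⟩
    intro j hj hIns
    apply hmax
    refine ⟨cubeSet (insert j F) (fun _ => false), ⟨?_, ?_⟩, ?_, ?_⟩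
    · rw [hV0]
      intro x hx k hk
      exact hx k fun hkF => hk (Finset.mem_insert_of_mem hkF)
    · intro hss
      have hm : ind (insert j F) ∈ cubeSet (insert j F) (fun _ => false) := by
        intro k hk; simp [ind, hk]
      have := hss hm j hj
      rw [hbF j hj] at this
      simp [ind] at this
    · intro x hx
      apply fib_down (y := ind (insert j F)) _ (ind_mem_fib.mpr hIns)
      intro k hkx
      by_cases hk : k ∈ insert j F
      · simp [ind, hk]
      · rw [hx k hk] at hkx; exact absurd hkx (by simp)
    · have hc : (insert j F).card = p + 1 := by
        rw [Finset.card_insert_of_notMem hj, hcard]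
      have : Nonempty ((Qgraph n).induce (cubeSet (insert j F) (fun _ => false))
          ≃g Qgraph ((insert j F).card)) := ⟨cubeIso _ _⟩
      rwa [hc] at this
  · rintro ⟨F, ⟨hIndep, hmaxI⟩, hcard, rfl⟩
    refine ⟨?_, ?_, ?_⟩
    · intro x hx
      apply fib_down (y := ind F) _ (ind_mem_fib.mpr hIndep)
      intro k hkx
      by_cases hk : k ∈ F
      · simp [ind, hk]
      · rw [hx k hk] at hkx; exact absurd hkx (by simp)
    · have : Nonempty ((Qgraph n).induce (cubeSet F (fun _ => false))
          ≃g Qgraph F.card) := ⟨cubeIso _ _⟩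
      rwa [hcard] at this
    · rintro ⟨V', ⟨hss, hne⟩, hfib, ⟨φ'⟩⟩
      obtain ⟨F', b', hcard', rfl⟩ := induced_cube_is_subcube φ'
      have hzero : (fun _ => false : Fin n → Bool) ∈ cubeSet F (fun _ => false) :=
        fun k _ => rfl
      have hb' : ∀ k ∉ F', b' k = false := fun k hk => ((hss hzero) k hk).symm
      have hFF' : F ⊆ F' := by
        intro i hi
        by_contra hiF'
        have h1 : ind {i} ∈ cubeSet F (fun _ => false) := by
          intro k hk
          have : k ≠ i := fun h => hk (h ▸ hi)
          simp [ind, this]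
        have := hss h1 i hiF'
        simp [ind, hb' i hiF'] at this
      obtain ⟨j, hjF', hjF⟩ : ∃ j ∈ F', j ∉ F := by
        by_contra hcon
        push_neg at hcon
        have : F' ⊆ F := hcon
        have := Finset.card_le_card this
        omega
      have hindF' : ind F' ∈ cubeSet F' b' := by
        intro k hk; simp [ind, hk, hb' k hk]
      have hIndepF' : Indep F' := ind_mem_fib.mp (hfib hindF')
      exact hmaxI j hjF (indep_subset (Finset.insert_subset hjF' hFF') hIndepF')

theorem card_eq_maxindep (p : ℕ) :
    Nat.card {V : Set (Fin n → Bool) // IsMaxCube n p (fibSet n) V} =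
      Nat.card {F : Finset (Fin n) // MaxIndep F ∧ F.card = p} := by
  symm
  apply Nat.card_eq_of_bijective
    (fun F => ⟨cubeSet F.1 (fun _ => false), maxcube_iff.mpr ⟨F.1, F.2.1, F.2.2, rfl⟩⟩)
  constructor
  · rintro ⟨F, hF⟩ ⟨F', hF'⟩ h
    exact Subtype.ext (cubeSet_zero_inj (congrArg Subtype.val h))
  · rintro ⟨V, hV⟩
    obtain ⟨F, hmax, hcard, rfl⟩ := maxcube_iff.mp hV
    exact ⟨⟨F, hmax, hcard⟩, rfl⟩

/-- Maximal independent sets in the path on `{0, …, n-1}`. -/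
def MI (n : ℕ) (F : Finset ℕ) : Prop :=
  (∀ a ∈ F, a < n) ∧ (∀ a ∈ F, a + 1 ∉ F) ∧
    (∀ a, a < n → a ∉ F → (∃ b ∈ F, b + 1 = a) ∨ a + 1 ∈ F)

lemma MI_finite (n p : ℕ) : Finite {F : Finset ℕ // MI n F ∧ F.card = p} := by
  have h : {F : Finset ℕ | MI n F ∧ F.card = p} ⊆ ↑((Finset.range n).powerset) := by
    intro F hF
    simp only [Finset.coe_powerset, Set.mem_preimage, Set.mem_powerset_iff]
    intro a ha
    exact Finset.mem_coe.mpr (Finset.mem_range.mpr (hF.1.1 a ha))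
  exact (Set.Finite.subset ((Finset.range n).powerset).finite_toSet h).to_subtype

lemma card_split {α : Type*} (P Q : α → Prop) (hfin : Finite {x // P x}) :
    Nat.card {x // P x} = Nat.card {x // P x ∧ Q x} + Nat.card {x // P x ∧ ¬Q x} := by
  classical
  haveI := hfin
  haveI : Finite {x // P x ∧ Q x} :=
    Finite.of_injective (fun y => (⟨y.1, y.2.1⟩ : {x // P x}))
      (fun a b h => Subtype.ext (by simpa using congrArg Subtype.val h))
  haveI : Finite {x // P x ∧ ¬Q x} :=
    Finite.of_injective (fun y => (⟨y.1, y.2.1⟩ : {x // P x}))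
      (fun a b h => Subtype.ext (by simpa using congrArg Subtype.val h))
  rw [← Nat.card_sum]
  apply Nat.card_congr
  refine ⟨fun x => if h : Q x.1 then Sum.inl ⟨x.1, x.2, h⟩ else Sum.inr ⟨x.1, x.2, h⟩,
    fun y => Sum.elim (fun a => ⟨a.1, a.2.1⟩) (fun a => ⟨a.1, a.2.1⟩) y, ?_, ?_⟩
  · rintro ⟨a, h⟩
    by_cases hq : Q a <;> simp [hq]
  · rintro (⟨a, h1, h2⟩ | ⟨a, h1, h2⟩) <;> simp [h2]

lemma chooseZ_succ (p : ℕ) (t : ℤ) :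
    chooseZ (p + 1) (t + 1) = chooseZ p (t + 1) + chooseZ p t := by
  unfold chooseZ
  by_cases h0 : 0 ≤ t
  · rw [if_pos (by omega), if_pos (by omega), if_pos h0]
    have ht : (t + 1).toNat = t.toNat + 1 := by omega
    rw [ht, Nat.choose_succ_succ]
    simp only [Nat.succ_eq_add_one]
    omega
  · by_cases h1 : t = -1
    · subst h1
      norm_num
    · rw [if_neg (by omega), if_neg (by omega), if_neg (by omega)]

lemma chooseZ_neg (a : ℕ) {b : ℤ} (h : b < 0) : chooseZ a b = 0 := by
  unfold chooseZ; rw [if_neg (by omega)]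


lemma MI_insA {n : ℕ} (hn : 2 ≤ n) {G : Finset ℕ} (hG : MI (n - 2) G) :
    MI n (insert 0 (G.image (· + 2))) := by
  obtain ⟨hb, hi, hd⟩ := hG
  refine ⟨?_, ?_, ?_⟩
  · intro a ha
    simp only [Finset.mem_insert, Finset.mem_image] at ha
    rcases ha with rfl | ⟨g, hg, rfl⟩
    · omega
    · have := hb g hg; omega
  · intro a ha hca
    simp only [Finset.mem_insert, Finset.mem_image] at ha hca
    rcases ha with rfl | ⟨g, hg, rfl⟩
    · rcases hca with h | ⟨g, hg, h⟩ <;> omega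
    · rcases hca with h | ⟨g', hg', h⟩
      · omega
      · have : g' = g + 1 := by omega
        exact hi g hg (this ▸ hg')
  · intro a ha haF
    simp only [Finset.mem_insert, Finset.mem_image] at haF ⊢
    push_neg at haF
    obtain ⟨ha0, haG⟩ := haF
    rcases Nat.lt_or_ge a 2 with h2 | h2
    · left
      exact ⟨0, Or.inl rfl, by omega⟩
    · have haG' : a - 2 ∉ G := fun h => (haG (a-2) h) (by omega)
      rcases hd (a - 2) (by omega) haG' with ⟨b, hb', he⟩ | hr
      · left
        exact ⟨b + 2, Or.inr ⟨b, hb', rfl⟩, by omega⟩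
      · right
        have h' : a - 1 ∈ G := by
          have he : a - 2 + 1 = a - 1 := by omega
          rwa [he] at hr
        exact Or.inr ⟨a - 1, h', by omega⟩

lemma MI_remA {n : ℕ} (hn : 2 ≤ n) {F : Finset ℕ} (hF : MI n F) (h0 : 0 ∈ F) :
    MI (n - 2) ((F.erase 0).image (· - 2)) ∧
      insert 0 (((F.erase 0).image (· - 2)).image (· + 2)) = F := by
  obtain ⟨hb, hi, hd⟩ := hF
  have h1F : 1 ∉ F := hi 0 h0
  have hge2 : ∀ a ∈ F.erase 0, 2 ≤ a := by
    intro a ha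
    rw [Finset.mem_erase] at ha
    rcases Nat.lt_or_ge a 2 with h | h
    · interval_cases a
      · exact absurd rfl ha.1
      · exact absurd ha.2 h1F
    · exact h
  constructor
  · refine ⟨?_, ?_, ?_⟩
    · intro a ha
      simp only [Finset.mem_image, Finset.mem_erase] at ha
      obtain ⟨x, hx, rfl⟩ := ha
      have := hb x hx.2
      have := hge2 x (Finset.mem_erase.mpr hx)
      omega
    · intro a ha hca
      simp only [Finset.mem_image, Finset.mem_erase] at ha hca
      obtain ⟨x, hx, rfl⟩ := ha
      obtain ⟨y, hy, hyx⟩ := hca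
      have hx2 := hge2 x (Finset.mem_erase.mpr hx)
      have hy2 := hge2 y (Finset.mem_erase.mpr hy)
      have : y = x + 1 := by omega
      exact hi x hx.2 (this ▸ hy.2)
    · intro a ha haG
      simp only [Finset.mem_image, Finset.mem_erase] at haG ⊢
      push_neg at haG
      have ha2 : a + 2 ∉ F := by
        intro h
        exact (haG (a + 2) ⟨by omega, h⟩) (by omega)
      rcases hd (a + 2) (by omega) ha2 with ⟨b, hbF, he⟩ | hr
      · have hb1 : b = a + 1 := by omega
        subst hb1
        rcases Nat.eq_zero_or_pos a with rfl | hapos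
        · exact absurd hbF h1F
        · left
          refine ⟨a - 1, ⟨a + 1, ⟨by omega, hbF⟩, by omega⟩, by omega⟩
      · right
        exact ⟨a + 3, ⟨by omega, hr⟩, by omega⟩
  · ext x
    simp only [Finset.mem_insert, Finset.mem_image, Finset.mem_erase]
    constructor
    · rintro (rfl | ⟨y, ⟨z, hz, rfl⟩, rfl⟩)
      · exact h0
      · have := hge2 z (Finset.mem_erase.mpr hz)
        have : z - 2 + 2 = z := by omega
        rw [this]
        exact hz.2
    · intro hx
      rcases Nat.eq_zero_or_pos x with rfl | hxpos
      · exact Or.inl rfl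
      · right
        have hx2 : 2 ≤ x := hge2 x (Finset.mem_erase.mpr ⟨by omega, hx⟩)
        exact ⟨x - 2, ⟨x, ⟨by omega, hx⟩, rfl⟩, by omega⟩

lemma MI_insB {n : ℕ} (hn : 3 ≤ n) {G : Finset ℕ} (hG : MI (n - 3) G) :
    MI n (insert 1 (G.image (· + 3))) ∧ 0 ∉ insert 1 (G.image (· + 3)) := by
  obtain ⟨hb, hi, hd⟩ := hG
  refine ⟨⟨?_, ?_, ?_⟩, ?_⟩
  · intro a ha
    simp only [Finset.mem_insert, Finset.mem_image] at ha
    rcases ha with rfl | ⟨g, hg, rfl⟩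
    · omega
    · have := hb g hg; omega
  · intro a ha hca
    simp only [Finset.mem_insert, Finset.mem_image] at ha hca
    rcases ha with rfl | ⟨g, hg, rfl⟩
    · rcases hca with h | ⟨g, hg, h⟩ <;> omega
    · rcases hca with h | ⟨g', hg', h⟩
      · omega
      · have : g' = g + 1 := by omega
        exact hi g hg (this ▸ hg')
  · intro a ha haF
    simp only [Finset.mem_insert, Finset.mem_image] at haF ⊢
    push_neg at haF
    obtain ⟨ha1, haG⟩ := haF
    rcases Nat.lt_or_ge a 3 with h3 | h3
    · interval_cases a
      · right; exact Or.inl rfl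
      · omega
      · left; exact ⟨1, Or.inl rfl, by omega⟩
    · have haG' : a - 3 ∉ G := fun h => (haG (a - 3) h) (by omega)
      rcases hd (a - 3) (by omega) haG' with ⟨b, hb', he⟩ | hr
      · left
        exact ⟨b + 3, Or.inr ⟨b, hb', rfl⟩, by omega⟩
      · right
        have h' : a - 2 ∈ G := by
          have he : a - 3 + 1 = a - 2 := by omega
          rwa [he] at hr
        exact Or.inr ⟨a - 2, h', by omega⟩
  · simp only [Finset.mem_insert, Finset.mem_image]
    push_neg
    exact ⟨by omega, fun g _ => by omega⟩

lemma MI_remB {n : ℕ} (hn : 3 ≤ n) {F : Finset ℕ} (hF : MI n F) (h0 : 0 ∉ F) :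
    1 ∈ F ∧ MI (n - 3) ((F.erase 1).image (· - 3)) ∧
      insert 1 (((F.erase 1).image (· - 3)).image (· + 3)) = F := by
  obtain ⟨hb, hi, hd⟩ := hF
  have h1F : 1 ∈ F := by
    rcases hd 0 (by omega) h0 with ⟨b, _, he⟩ | hr
    · omega
    · exact hr
  have h2F : 2 ∉ F := hi 1 h1F
  have hge3 : ∀ a ∈ F.erase 1, 3 ≤ a := by
    intro a ha
    rw [Finset.mem_erase] at ha
    rcases Nat.lt_or_ge a 3 with h | h
    · interval_cases a
      · exact absurd ha.2 h0
      · exact absurd rfl ha.1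
      · exact absurd ha.2 h2F
    · exact h
  refine ⟨h1F, ⟨?_, ?_, ?_⟩, ?_⟩
  · intro a ha
    simp only [Finset.mem_image, Finset.mem_erase] at ha
    obtain ⟨x, hx, rfl⟩ := ha
    have := hb x hx.2
    have := hge3 x (Finset.mem_erase.mpr hx)
    omega
  · intro a ha hca
    simp only [Finset.mem_image, Finset.mem_erase] at ha hca
    obtain ⟨x, hx, rfl⟩ := ha
    obtain ⟨y, hy, hyx⟩ := hca
    have hx3 := hge3 x (Finset.mem_erase.mpr hx)
    have hy3 := hge3 y (Finset.mem_erase.mpr hy)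
    have : y = x + 1 := by omega
    exact hi x hx.2 (this ▸ hy.2)
  · intro a ha haG
    simp only [Finset.mem_image, Finset.mem_erase] at haG ⊢
    push_neg at haG
    have ha3 : a + 3 ∉ F := by
      intro h
      exact (haG (a + 3) ⟨by omega, h⟩) (by omega)
    rcases hd (a + 3) (by omega) ha3 with ⟨b, hbF, he⟩ | hr
    · have hb1 : b = a + 2 := by omega
      subst hb1
      rcases Nat.eq_zero_or_pos a with rfl | hapos
      · exact absurd hbF h2F
      · left
        refine ⟨a - 1, ⟨a + 2, ⟨by omega, hbF⟩, by omega⟩, by omega⟩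
    · right
      exact ⟨a + 4, ⟨by omega, hr⟩, by omega⟩
  · ext x
    simp only [Finset.mem_insert, Finset.mem_image, Finset.mem_erase]
    constructor
    · rintro (rfl | ⟨y, ⟨z, hz, rfl⟩, rfl⟩)
      · exact h1F
      · have := hge3 z (Finset.mem_erase.mpr hz)
        have : z - 3 + 3 = z := by omega
        rw [this]
        exact hz.2
    · intro hx
      rcases eq_or_ne x 1 with rfl | hx1
      · exact Or.inl rfl
      · right
        have hx3 : 3 ≤ x := hge3 x (Finset.mem_erase.mpr ⟨hx1, hx⟩)
        exact ⟨x - 3, ⟨x, ⟨hx1, hx⟩, rfl⟩, by omega⟩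

lemma shiftA (n p : ℕ) (hn : 2 ≤ n) :
    Nat.card {F : Finset ℕ // (MI n F ∧ F.card = p + 1) ∧ 0 ∈ F} =
      Nat.card {G : Finset ℕ // MI (n - 2) G ∧ G.card = p} := by
  symm
  apply Nat.card_eq_of_bijective (fun G =>
    (⟨insert 0 (G.1.image (· + 2)), ⟨MI_insA hn G.2.1, by
      rw [Finset.card_insert_of_notMem (by simp),
        Finset.card_image_of_injective _ (add_left_injective 2), G.2.2]⟩,
      Finset.mem_insert_self _ _⟩ :
      {F : Finset ℕ // (MI n F ∧ F.card = p + 1) ∧ 0 ∈ F}))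
  constructor
  · rintro ⟨G, hG⟩ ⟨G', hG'⟩ h
    have h' := congrArg Subtype.val h
    simp only at h'
    apply Subtype.ext
    ext g
    have : g + 2 ∈ insert 0 (G.image (· + 2)) ↔ g + 2 ∈ insert 0 (G'.image (· + 2)) := by
      rw [h']
    simp only [Finset.mem_insert, Finset.mem_image] at this
    constructor
    · intro hg
      rcases this.mp (Or.inr ⟨g, hg, rfl⟩) with hc | ⟨g', hg', he⟩
      · omega
      · have : g' = g := by omega
        exact this ▸ hg'
    · intro hg
      rcases this.mpr (Or.inr ⟨g, hg, rfl⟩) with hc | ⟨g', hg', he⟩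
      · omega
      · have : g' = g := by omega
        exact this ▸ hg'
  · rintro ⟨F, ⟨hMI, hcard⟩, h0⟩
    obtain ⟨hMI', hrec⟩ := MI_remA hn hMI h0
    have hcard' : ((F.erase 0).image (· - 2)).card = p := by
      have hinj : Set.InjOn (· - 2) (F.erase 0) := by
        intro x hx y hy hxy
        rw [Finset.mem_coe, Finset.mem_erase] at hx hy
        have h1F : 1 ∉ F := hMI.2.1 0 h0
        have hx2 : 2 ≤ x := by
          rcases Nat.lt_or_ge x 2 with h | h
          · interval_cases x
            · exact absurd rfl hx.1
            · exact absurd hx.2 h1F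
          · exact h
        have hy2 : 2 ≤ y := by
          rcases Nat.lt_or_ge y 2 with h | h
          · interval_cases y
            · exact absurd rfl hy.1
            · exact absurd hy.2 h1F
          · exact h
        simp only at hxy
        omega
      rw [Finset.card_image_of_injOn hinj, Finset.card_erase_of_mem h0, hcard]
      omega
    exact ⟨⟨(F.erase 0).image (· - 2), hMI', hcard'⟩, Subtype.ext hrec⟩

lemma shiftB (n p : ℕ) (hn : 3 ≤ n) :
    Nat.card {F : Finset ℕ // (MI n F ∧ F.card = p + 1) ∧ ¬0 ∈ F} =
      Nat.card {G : Finset ℕ // MI (n - 3) G ∧ G.card = p} := by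
  symm
  apply Nat.card_eq_of_bijective (fun G =>
    (⟨insert 1 (G.1.image (· + 3)), ⟨(MI_insB hn G.2.1).1, by
      rw [Finset.card_insert_of_notMem (by simp),
        Finset.card_image_of_injective _ (add_left_injective 3), G.2.2]⟩,
      (MI_insB hn G.2.1).2⟩ :
      {F : Finset ℕ // (MI n F ∧ F.card = p + 1) ∧ ¬0 ∈ F}))
  constructor
  · rintro ⟨G, hG⟩ ⟨G', hG'⟩ h
    have h' := congrArg Subtype.val h
    simp only at h'
    apply Subtype.ext
    ext g
    have : g + 3 ∈ insert 1 (G.image (· + 3)) ↔ g + 3 ∈ insert 1 (G'.image (· + 3)) := by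
      rw [h']
    simp only [Finset.mem_insert, Finset.mem_image] at this
    constructor
    · intro hg
      rcases this.mp (Or.inr ⟨g, hg, rfl⟩) with hc | ⟨g', hg', he⟩
      · omega
      · have : g' = g := by omega
        exact this ▸ hg'
    · intro hg
      rcases this.mpr (Or.inr ⟨g, hg, rfl⟩) with hc | ⟨g', hg', he⟩
      · omega
      · have : g' = g := by omega
        exact this ▸ hg'
  · rintro ⟨F, ⟨hMI, hcard⟩, h0⟩
    obtain ⟨h1F, hMI', hrec⟩ := MI_remB hn hMI h0
    have h0F : 0 ∉ F := h0
    have h2F : 2 ∉ F := hMI.2.1 1 h1F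
    have hcard' : ((F.erase 1).image (· - 3)).card = p := by
      have hinj : Set.InjOn (· - 3) (F.erase 1) := by
        intro x hx y hy hxy
        rw [Finset.mem_coe, Finset.mem_erase] at hx hy
        have hx3 : 3 ≤ x := by
          rcases Nat.lt_or_ge x 3 with h | h
          · interval_cases x
            · exact absurd hx.2 h0F
            · exact absurd rfl hx.1
            · exact absurd hx.2 h2F
          · exact h
        have hy3 : 3 ≤ y := by
          rcases Nat.lt_or_ge y 3 with h | h
          · interval_cases y
            · exact absurd hy.2 h0F
            · exact absurd rfl hy.1
            · exact absurd hy.2 h2F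
          · exact h
        simp only at hxy
        omega
      rw [Finset.card_image_of_injOn hinj, Finset.card_erase_of_mem h1F, hcard]
      omega
    exact ⟨⟨(F.erase 1).image (· - 3), hMI', hcard'⟩, Subtype.ext hrec⟩


lemma MI_zero {F : Finset ℕ} : MI 0 F ↔ F = ∅ := by
  constructor
  · rintro ⟨hb, -, -⟩
    ext a
    simp only [Finset.notMem_empty, iff_false]
    intro ha
    exact absurd (hb a ha) (by omega)
  · rintro rfl
    exact ⟨fun a ha => absurd ha (Finset.notMem_empty a),
      fun a ha => absurd ha (Finset.notMem_empty a),
      fun a ha => absurd ha (by omega)⟩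

lemma MI_one {F : Finset ℕ} : MI 1 F ↔ F = {0} := by
  constructor
  · rintro ⟨hb, -, hd⟩
    have h0 : 0 ∈ F := by
      by_contra h0
      rcases hd 0 (by omega) h0 with ⟨b, hbF, he⟩ | h
      · omega
      · exact absurd (hb 1 h) (by omega)
    ext a
    simp only [Finset.mem_singleton]
    constructor
    · intro ha; have := hb a ha; omega
    · rintro rfl; exact h0
  · rintro rfl
    refine ⟨?_, ?_, ?_⟩
    · intro a ha; simp only [Finset.mem_singleton] at ha; omega
    · intro a ha; simp only [Finset.mem_singleton] at ha ⊢; omega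
    · intro a ha haF; simp only [Finset.mem_singleton] at haF; omega

lemma MI_two {F : Finset ℕ} : MI 2 F ↔ F = {0} ∨ F = {1} := by
  constructor
  · rintro ⟨hb, hi, hd⟩
    by_cases h0 : 0 ∈ F
    · left
      have h1 : 1 ∉ F := hi 0 h0
      ext a
      simp only [Finset.mem_singleton]
      constructor
      · intro ha
        have := hb a ha
        interval_cases a
        · rfl
        · exact absurd ha h1
      · rintro rfl; exact h0
    · right
      have h1 : 1 ∈ F := by
        rcases hd 0 (by omega) h0 with ⟨b, hbF, he⟩ | h
        · omega
        · exact h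
      ext a
      simp only [Finset.mem_singleton]
      constructor
      · intro ha
        have := hb a ha
        interval_cases a
        · exact absurd ha h0
        · rfl
      · rintro rfl; exact h1
  · rintro (rfl | rfl)
    · refine ⟨?_, ?_, ?_⟩
      · intro a ha; simp only [Finset.mem_singleton] at ha; omega
      · intro a ha; simp only [Finset.mem_singleton] at ha ⊢; omega
      · intro a ha haF
        simp only [Finset.mem_singleton] at haF ⊢
        left; exact ⟨0, rfl, by omega⟩
    · refine ⟨?_, ?_, ?_⟩
      · intro a ha; simp only [Finset.mem_singleton] at ha; omega
      · intro a ha; simp only [Finset.mem_singleton] at ha ⊢; omega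
      · intro a ha haF
        simp only [Finset.mem_singleton] at haF ⊢
        right
        have : a = 0 := by omega
        subst this; rfl

lemma count_unique {n p : ℕ} (F₀ : Finset ℕ) (h₀ : MI n F₀ ∧ F₀.card = p)
    (huniq : ∀ F : Finset ℕ, MI n F ∧ F.card = p → F = F₀) :
    Nat.card {F : Finset ℕ // MI n F ∧ F.card = p} = 1 := by
  haveI : Unique {F : Finset ℕ // MI n F ∧ F.card = p} :=
    ⟨⟨⟨F₀, h₀⟩⟩, fun F => Subtype.ext (huniq F.1 F.2)⟩
  exact Nat.card_unique

lemma count_empty {n p : ℕ} (h : ∀ F : Finset ℕ, MI n F → F.card ≠ p) :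
    Nat.card {F : Finset ℕ // MI n F ∧ F.card = p} = 0 := by
  haveI : IsEmpty {F : Finset ℕ // MI n F ∧ F.card = p} :=
    ⟨fun F => h F.1 F.2.1 F.2.2⟩
  exact Nat.card_of_isEmpty

lemma chooseZ_one (b : ℤ) (hb : 2 ≤ b) : chooseZ 1 b = 0 := by
  unfold chooseZ
  rw [if_pos (by omega)]
  apply Nat.choose_eq_zero_of_lt
  omega

theorem MI_count : ∀ n p : ℕ,
    Nat.card {F : Finset ℕ // MI n F ∧ F.card = p} =
      chooseZ (p + 1) ((n : ℤ) - 2 * p + 1) := by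
  intro n
  induction n using Nat.strong_induction_on with
  | _ n IH =>
    match n with
    | 0 =>
      intro p
      match p with
      | 0 =>
        rw [count_unique ∅ ⟨MI_zero.mpr rfl, Finset.card_empty⟩
          (fun F hF => MI_zero.mp hF.1)]
        simp [chooseZ]
      | (q+1) =>
        rw [count_empty (fun F hF hc => by
          rw [MI_zero.mp hF, Finset.card_empty] at hc
          omega)]
        rw [chooseZ_neg _ (by push_cast; omega)]
    | 1 =>
      intro p
      match p with
      | 1 =>
        rw [count_unique {0} ⟨MI_one.mpr rfl, Finset.card_singleton 0⟩
          (fun F hF => MI_one.mp hF.1)]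
        simp [chooseZ]
      | 0 =>
        rw [count_empty (fun F hF hc => by
          rw [MI_one.mp hF, Finset.card_singleton] at hc
          omega)]
        rw [chooseZ_one _ (by norm_num)]
      | (q+2) =>
        rw [count_empty (fun F hF hc => by
          rw [MI_one.mp hF, Finset.card_singleton] at hc
          omega)]
        rw [chooseZ_neg _ (by push_cast; omega)]
    | 2 =>
      intro p
      match p with
      | 1 =>
        have hset : {F : Finset ℕ | MI 2 F ∧ F.card = 1} =
            {({0} : Finset ℕ), {1}} := by
          ext F
          simp only [Set.mem_setOf_eq, Set.mem_insert_iff, Set.mem_singleton_iff]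
          constructor
          · rintro ⟨h, -⟩; exact MI_two.mp h
          · rintro (rfl | rfl)
            · exact ⟨MI_two.mpr (Or.inl rfl), rfl⟩
            · exact ⟨MI_two.mpr (Or.inr rfl), rfl⟩
        have h1 : Nat.card {F : Finset ℕ // MI 2 F ∧ F.card = 1} =
            Set.ncard {F : Finset ℕ | MI 2 F ∧ F.card = 1} :=
          Nat.card_coe_set_eq _
        rw [h1, hset, Set.ncard_pair (by decide)]
        simp [chooseZ]
      | 0 =>
        rw [count_empty (fun F hF hc => by
          rcases MI_two.mp hF with rfl | rfl <;>
            (rw [Finset.card_singleton] at hc; omega))]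
        rw [chooseZ_one _ (by norm_num)]
      | (q+2) =>
        rw [count_empty (fun F hF hc => by
          rcases MI_two.mp hF with rfl | rfl <;>
            (rw [Finset.card_singleton] at hc; omega))]
        rw [chooseZ_neg _ (by push_cast; omega)]
    | (m+3) =>
      intro p
      match p with
      | 0 =>
        rw [count_empty (fun F hF hc => by
          rw [Finset.card_eq_zero] at hc
          subst hc
          rcases hF.2.2 0 (by omega) (Finset.notMem_empty 0) with ⟨b, hb, -⟩ | h
          · exact Finset.notMem_empty b hb
          · exact Finset.notMem_empty 1 h)]
        rw [chooseZ_one _ (by omega)]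
      | (q+1) =>
        rw [card_split (fun F => MI (m+3) F ∧ F.card = q + 1) (fun F => 0 ∈ F)
          (MI_finite _ _), shiftA _ q (by omega), shiftB _ q (by omega),
          IH (m+3-2) (by omega) q, IH (m+3-3) (by omega) q]
        have eA : ((m+3-2 : ℕ) : ℤ) - 2 * q + 1 = ((m : ℤ) - 2 * q + 1) + 1 := by
          push_cast [show m+3-2 = m+1 from rfl]; ring
        have eB : ((m+3-3 : ℕ) : ℤ) - 2 * q + 1 = (m : ℤ) - 2 * q + 1 := by
          push_cast [show m+3-3 = m from rfl]; ring
        have eC : ((m+3 : ℕ) : ℤ) - 2 * ((q+1 : ℕ) : ℤ) + 1 = ((m : ℤ) - 2 * q + 1) + 1 := by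
          push_cast; ring
        rw [eA, eB, eC, chooseZ_succ (q+1) ((m : ℤ) - 2 * q + 1)]

lemma toMI {F : Finset (Fin n)} (h : MaxIndep F) : MI n (F.image Fin.val) := by
  obtain ⟨hInd, hMax⟩ := h
  refine ⟨?_, ?_, ?_⟩
  · intro a ha
    obtain ⟨i, _, rfl⟩ := Finset.mem_image.mp ha
    exact i.isLt
  · intro a ha hca
    obtain ⟨i, hi, rfl⟩ := Finset.mem_image.mp ha
    obtain ⟨j, hj, hje⟩ := Finset.mem_image.mp hca
    exact hInd i hi j hj hje
  · intro a ha haS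
    set j : Fin n := ⟨a, ha⟩ with hjdef
    have hjF : j ∉ F := fun hm => haS (Finset.mem_image.mpr ⟨j, hm, rfl⟩)
    have := hMax j hjF
    unfold Indep at this
    push_neg at this
    obtain ⟨x, hx, y, hy, hxy⟩ := this
    rcases Finset.mem_insert.mp hx with rfl | hxF
    · rcases Finset.mem_insert.mp hy with rfl | hyF
      · omega
      · right
        have : (y : ℕ) = a + 1 := hxy
        exact this ▸ Finset.mem_image.mpr ⟨y, hyF, rfl⟩
    · rcases Finset.mem_insert.mp hy with rfl | hyF
      · left
        exact ⟨(x : ℕ), Finset.mem_image.mpr ⟨x, hxF, rfl⟩, hxy.symm⟩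
      · exact absurd hxy (hInd x hxF y hyF)

lemma fromMI {S : Finset ℕ} (h : MI n S) :
    MaxIndep (Finset.univ.filter (fun i : Fin n => (i : ℕ) ∈ S)) ∧
      (Finset.univ.filter (fun i : Fin n => (i : ℕ) ∈ S)).image Fin.val = S := by
  obtain ⟨hb, hi, hd⟩ := h
  have himg : (Finset.univ.filter (fun i : Fin n => (i : ℕ) ∈ S)).image Fin.val = S := by
    ext a
    simp only [Finset.mem_image, Finset.mem_filter, Finset.mem_univ, true_and]
    constructor
    · rintro ⟨i, hiS, rfl⟩; exact hiS
    · intro haS; exact ⟨⟨a, hb a haS⟩, haS, rfl⟩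
  refine ⟨⟨?_, ?_⟩, himg⟩
  · intro x hx y hy hxy
    rw [Finset.mem_filter] at hx hy
    exact hi (x : ℕ) hx.2 (hxy ▸ hy.2)
  · intro j hj hInd
    rw [Finset.mem_filter] at hj
    push_neg at hj
    have hjS : (j : ℕ) ∉ S := hj (Finset.mem_univ j)
    rcases hd (j : ℕ) j.isLt hjS with ⟨b, hbS, hb1⟩ | hr
    · have hbn : b < n := by have := hb b hbS; omega
      have hmem : (⟨b, hbn⟩ : Fin n) ∈ Finset.univ.filter (fun i : Fin n => (i : ℕ) ∈ S) :=
        Finset.mem_filter.mpr ⟨Finset.mem_univ _, hbS⟩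
      exact hInd ⟨b, hbn⟩ (Finset.mem_insert_of_mem hmem) j (Finset.mem_insert_self _ _)
        (by simpa using hb1.symm)
    · have hjn : (j : ℕ) + 1 < n := hb _ hr
      have hmem : (⟨(j : ℕ) + 1, hjn⟩ : Fin n) ∈
          Finset.univ.filter (fun i : Fin n => (i : ℕ) ∈ S) :=
        Finset.mem_filter.mpr ⟨Finset.mem_univ _, hr⟩
      exact hInd j (Finset.mem_insert_self _ _) ⟨(j : ℕ) + 1, hjn⟩
        (Finset.mem_insert_of_mem hmem) rfl

lemma card_bridge (n p : ℕ) :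
    Nat.card {F : Finset (Fin n) // MaxIndep F ∧ F.card = p} =
      Nat.card {F : Finset ℕ // MI n F ∧ F.card = p} := by
  apply Nat.card_eq_of_bijective (fun F =>
    (⟨F.1.image Fin.val, toMI F.2.1, by
        rw [Finset.card_image_of_injective _ Fin.val_injective]
        exact F.2.2⟩ : {F : Finset ℕ // MI n F ∧ F.card = p}))
  constructor
  · rintro ⟨F, hF⟩ ⟨F', hF'⟩ h
    have h' := congrArg Subtype.val h
    simp only at h'
    apply Subtype.ext
    ext i
    constructor
    · intro hiF
      have : (i : ℕ) ∈ F'.image Fin.val := h' ▸ Finset.mem_image.mpr ⟨i, hiF, rfl⟩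
      obtain ⟨i', hi', he⟩ := Finset.mem_image.mp this
      exact Fin.val_injective he ▸ hi'
    · intro hiF
      have : (i : ℕ) ∈ F.image Fin.val := h' ▸ Finset.mem_image.mpr ⟨i, hiF, rfl⟩
      obtain ⟨i', hi', he⟩ := Finset.mem_image.mp this
      exact Fin.val_injective he ▸ hi'
  · rintro ⟨S, hMI, hcard⟩
    obtain ⟨hmax, himg⟩ := fromMI hMI
    refine ⟨⟨Finset.univ.filter (fun i : Fin n => (i : ℕ) ∈ S), hmax, ?_⟩, Subtype.ext himg⟩
    rw [← himg, Finset.card_image_of_injective _ Fin.val_injective] at hcard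
    exact hcard

end FibCube

/-- The number of maximal hypercubes of dimension `p` in the Fibonacci cube `Γ_n`
is `(p+1).choose (n - 2p + 1)` (binomials with negative lower index being `0`). -/
theorem fibonacci_max_cube_count (n p : ℕ) (h : p ≤ n) :
    Nat.card {V : Set (Fin n → Bool) // IsMaxCube n p (fibSet n) V} =
      chooseZ (p + 1) ((n : ℤ) - 2 * p + 1) := by
  rw [FibCube.card_eq_maxindep p, FibCube.card_bridge n p, FibCube.MI_count n p]
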